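/- For every natural number k, the post-insertion level set satisfies L'_{k+1} = (L_{k+1} \ T_{k+1}) ∪ T_k. -/

import Mathlib

/-- `c` is an increasing subsequence of `(S, f)`: a list of indices, all in `S`,
strictly increasing in index and strictly increasing in value. -/
def IsIncrSubseq (S : Finset ℕ) (f : ℕ → ℝ) (c : List ℕ) : Prop :=
  (∀ a ∈ c, a ∈ S) ∧ c.Chain' (· < ·) ∧ c.Chain' (fun a b => f a < f b)

/-- `lvl S f i` is the maximum length of an increasing subsequence of `(S, f)` ending at `i`. -/
noncomputable def lvl (S : Finset ℕ) (f : ℕ → ℝ) (i : ℕ) : ℕ :=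
  sSup {m | ∃ c : List ℕ, IsIncrSubseq S f c ∧ c.getLast? = some i ∧ c.length = m}

/-- The level set `L_k = {i ∈ S : lvl S f i = k}`. -/
def levelSet (S : Finset ℕ) (f : ℕ → ℝ) (k : ℕ) : Set ℕ :=
  {i | i ∈ S ∧ lvl S f i = k}

/-- The promoted set `T_k`: indices of `S' = S ∪ {x}` whose post-insertion level is `k + 1`
and which are either the inserted index `x` or had pre-insertion level `k`. -/
def promoted (S : Finset ℕ) (f : ℕ → ℝ) (x : ℕ) (k : ℕ) : Set ℕ :=
  {i | i ∈ insert x S ∧ lvl (insert x S) f i = k + 1 ∧ (i = x ∨ lvl S f i = k)}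

/-!
Adding the index `x` can only lengthen increasing subsequences, while deleting `x` from a longest
increasing subsequence of `S ∪ {x}` ending at `i ∈ S` shortens it by at most one. Hence
`l(i) ≤ l'(i) ≤ l(i) + 1` on `S`, and the identity is a case analysis on which of the two values
`l'(i)` takes.
-/

theorem List.getLast?_erase_of_ne {α : Type*} [BEq α] [LawfulBEq α] {l : List α} {a b : α}
    (hl : l.getLast? = some a) (hab : b ≠ a) : (l.erase b).getLast? = some a := by
  obtain ⟨l', rfl⟩ := List.getLast?_eq_some_iff.mp hl
  rw [List.erase_append]
  split_ifs <;> simp [hab.symm]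

namespace IsIncrSubseq

variable {S T : Finset ℕ} {f : ℕ → ℝ} {c d : List ℕ}

theorem nodup (h : IsIncrSubseq S f c) : c.Nodup :=
  (List.isChain_iff_pairwise.mp h.2.1).imp ne_of_lt

theorem length_le_card (h : IsIncrSubseq S f c) : c.length ≤ S.card := by
  classical
  calc c.length = c.toFinset.card := (List.toFinset_card_of_nodup h.nodup).symm
    _ ≤ S.card := Finset.card_le_card fun a ha => h.1 a (List.mem_toFinset.mp ha)

theorem mono (hST : S ⊆ T) (h : IsIncrSubseq S f c) : IsIncrSubseq T f c :=
  ⟨fun a ha => hST (h.1 a ha), h.2⟩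

theorem sublist (h : IsIncrSubseq S f c) (hdc : d.Sublist c) : IsIncrSubseq S f d := by
  have : Trans (fun a b => f a < f b) (fun a b => f a < f b) (fun a b => f a < f b) :=
    ⟨lt_trans⟩
  exact ⟨fun a ha => h.1 a (hdc.subset ha), h.2.1.sublist hdc, h.2.2.sublist hdc⟩

theorem erase_of_insert {x : ℕ} (h : IsIncrSubseq (insert x S) f c) :
    IsIncrSubseq S f (c.erase x) := by
  refine ⟨fun a ha => ?_, (h.sublist List.erase_sublist).2⟩
  obtain ⟨hax, hac⟩ := h.nodup.mem_erase_iff.mp ha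
  exact (Finset.mem_insert.mp (h.1 a hac)).resolve_left hax

end IsIncrSubseq

section lvl

variable {S T : Finset ℕ} {f : ℕ → ℝ} {c : List ℕ} {i : ℕ}

theorem bddAbove_lengths_isIncrSubseq_getLast :
    BddAbove {m | ∃ c, IsIncrSubseq S f c ∧ c.getLast? = some i ∧ c.length = m} :=
  ⟨S.card, fun _ ⟨_, hd, _, hl⟩ => hl ▸ hd.length_le_card⟩

theorem le_lvl (h : IsIncrSubseq S f c) (hc : c.getLast? = some i) : c.length ≤ lvl S f i :=
  le_csSup bddAbove_lengths_isIncrSubseq_getLast ⟨c, h, hc, rfl⟩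

theorem exists_isIncrSubseq_length_eq_lvl (hi : i ∈ S) :
    ∃ c, IsIncrSubseq S f c ∧ c.getLast? = some i ∧ c.length = lvl S f i := by
  have hsingle : IsIncrSubseq S f [i] :=
    ⟨by simpa using hi, List.isChain_singleton _, List.isChain_singleton _⟩
  exact Nat.sSup_mem (s := {m | ∃ c, IsIncrSubseq S f c ∧ c.getLast? = some i ∧ c.length = m})
    ⟨1, [i], hsingle, rfl, rfl⟩ bddAbove_lengths_isIncrSubseq_getLast

theorem lvl_mono (hST : S ⊆ T) (hi : i ∈ S) : lvl S f i ≤ lvl T f i := by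
  obtain ⟨c, hc, hlast, hlen⟩ := exists_isIncrSubseq_length_eq_lvl (f := f) hi
  exact hlen ▸ le_lvl (hc.mono hST) hlast

theorem lvl_insert_le_succ (x : ℕ) (hi : i ∈ S) : lvl (insert x S) f i ≤ lvl S f i + 1 := by
  obtain rfl | hix := eq_or_ne i x
  · simp [Finset.insert_eq_of_mem hi]
  obtain ⟨c, hc, hlast, hlen⟩ :=
    exists_isIncrSubseq_length_eq_lvl (f := f) (Finset.mem_insert_of_mem hi : i ∈ insert x S)
  have hle : c.length ≤ (c.erase x).length + 1 := by
    rw [List.length_erase]; split <;> omega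
  have := le_lvl hc.erase_of_insert (List.getLast?_erase_of_ne hlast hix.symm)
  omega

end lvl

theorem stmt_5_general (S : Finset ℕ) (f : ℕ → ℝ) (x : ℕ) (k : ℕ) :
    levelSet (insert x S) f (k + 1) =
      (levelSet S f (k + 1) \ promoted S f x (k + 1)) ∪ promoted S f x k := by
  ext i
  simp only [levelSet, promoted, Set.mem_union, Set.mem_sdiff, Set.mem_ofPred_eq]
  by_cases hiS : i ∈ S
  · have hlo := lvl_mono (f := f) (Finset.subset_insert x S) hiS
    have hhi := lvl_insert_le_succ (f := f) x hiS
    simp only [Finset.mem_insert_of_mem hiS, true_and, hiS]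
    omega
  · simp only [Finset.mem_insert, hiS, or_false, false_and, false_or]
    tauto

/-- For every natural number `k`, the post-insertion level set satisfies
`L'_{k+1} = (L_{k+1} \ T_{k+1}) ∪ T_k`. -/
theorem stmt_5 (S : Finset ℕ) (f : ℕ → ℝ) (x : ℕ) (hx : x ∉ S) (k : ℕ) :
    levelSet (insert x S) f (k + 1) =
      (levelSet S f (k + 1) \ promoted S f x (k + 1)) ∪ promoted S f x k :=
  stmt_5_general S f x k
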